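/- Every ωh-perfect graph is perfect; that is, if for every induced subgraph H of G the Hadwiger number of H equals the clique number of H, then for every induced subgraph H of G the chromatic number of H equals the clique number of H. -/

import Mathlib

open SimpleGraph

/-- A `k`-coloring `c` of `G` is *complete* if it is surjective and for every pair of distinct
colors there is an edge of `G` whose endpoints receive those two colors. -/
def IsCompleteColoring {V : Type*} (G : SimpleGraph V) {k : ℕ} (c : V → Fin k) : Prop :=
  Function.Surjective c ∧
    ∀ i j : Fin k, i ≠ j → ∃ u v : V, G.Adj u v ∧ c u = i ∧ c v = j

/-- A coloring is *proper* if adjacent vertices receive distinct colors. -/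
def IsProperColoring {V : Type*} (G : SimpleGraph V) {k : ℕ} (c : V → Fin k) : Prop :=
  ∀ u v : V, G.Adj u v → c u ≠ c v

/-- A `k`-coloring `c` of `G` is *dominating* if it is surjective and every color class contains
a vertex having a neighbor in every other color class. -/
def IsDominatingColoring {V : Type*} (G : SimpleGraph V) {k : ℕ} (c : V → Fin k) : Prop :=
  Function.Surjective c ∧
    ∀ i : Fin k, ∃ v : V, c v = i ∧ ∀ j : Fin k, j ≠ i → ∃ u : V, G.Adj v u ∧ c u = j

/-- A `k`-coloring `c` of `G` is *pseudo-Grundy* if it is surjective and every vertex is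
adjacent to at least one vertex of each smaller color. -/
def IsPseudoGrundyColoring {V : Type*} (G : SimpleGraph V) {k : ℕ} (c : V → Fin k) : Prop :=
  Function.Surjective c ∧
    ∀ v : V, ∀ j : Fin k, j < c v → ∃ u : V, G.Adj v u ∧ c u = j

/-- The pseudoachromatic number `ψ(G)`: the largest `k` admitting a complete `k`-coloring. -/
noncomputable def pseudoachromaticNumber {V : Type*} (G : SimpleGraph V) : ℕ :=
  sSup {k | ∃ c : V → Fin k, IsCompleteColoring G c}

/-- The achromatic number `α(G)`: the largest `k` admitting a proper complete `k`-coloring. -/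
noncomputable def achromaticNumber {V : Type*} (G : SimpleGraph V) : ℕ :=
  sSup {k | ∃ c : V → Fin k, IsProperColoring G c ∧ IsCompleteColoring G c}

/-- The b-chromatic number `b(G)`: the largest `k` admitting a proper dominating `k`-coloring. -/
noncomputable def bChromaticNumber {V : Type*} (G : SimpleGraph V) : ℕ :=
  sSup {k | ∃ c : V → Fin k, IsProperColoring G c ∧ IsDominatingColoring G c}

/-- The pseudo-b-chromatic number `B(G)`: the largest `k` admitting a dominating `k`-coloring. -/
noncomputable def pseudoBChromaticNumber {V : Type*} (G : SimpleGraph V) : ℕ :=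
  sSup {k | ∃ c : V → Fin k, IsDominatingColoring G c}

/-- The Grundy number `Γ(G)`: the largest `k` admitting a proper pseudo-Grundy `k`-coloring. -/
noncomputable def grundyNumber {V : Type*} (G : SimpleGraph V) : ℕ :=
  sSup {k | ∃ c : V → Fin k, IsProperColoring G c ∧ IsPseudoGrundyColoring G c}

/-- The pseudo-Grundy number `γ(G)`: the largest `k` admitting a pseudo-Grundy `k`-coloring. -/
noncomputable def pseudoGrundyNumber {V : Type*} (G : SimpleGraph V) : ℕ :=
  sSup {k | ∃ c : V → Fin k, IsPseudoGrundyColoring G c}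

/-- `G` contains the complete graph `K_k` as a minor: there are `k` pairwise disjoint
"branch sets", each inducing a connected (nonempty) subgraph, with an edge of `G` between
every two of them. -/
def HasCompleteMinor {V : Type*} (G : SimpleGraph V) (k : ℕ) : Prop :=
  ∃ B : Fin k → Set V,
    (∀ i, (G.induce (B i)).Connected) ∧
    (∀ i j : Fin k, i ≠ j → Disjoint (B i) (B j)) ∧
    (∀ i j : Fin k, i ≠ j → ∃ u ∈ B i, ∃ v ∈ B j, G.Adj u v)

/-- The Hadwiger number `h(G)`: the largest `k` such that `K_k` is a minor of `G`. -/
noncomputable def hadwigerNumber {V : Type*} (G : SimpleGraph V) : ℕ :=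
  sSup {k | HasCompleteMinor G k}

/-- `G` has an induced subgraph isomorphic to `H`. -/
def HasInducedCopy {V : Type*} {W : Type*} (G : SimpleGraph V) (H : SimpleGraph W) : Prop :=
  ∃ s : Set V, Nonempty (G.induce s ≃g H)

/-- A graph is *chordal* if it has no induced cycle on four or more vertices. -/
def IsChordal {V : Type*} (G : SimpleGraph V) : Prop :=
  ∀ n : ℕ, 4 ≤ n → ¬ HasInducedCopy G (cycleGraph n)

/-- The diamond graph `D`: `K₄` minus one edge. -/
def diamondGraph : SimpleGraph (Fin 4) :=
  (⊤ : SimpleGraph (Fin 4)).deleteEdges {s(0, 1)}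

/-!
An induced cycle of length at least four has Hadwiger number `3` and clique number `2`, so an
ωh-perfect graph has no such hole. Without holes, Dirac's argument applies: a minimal separator
of two non-adjacent vertices is a clique, and induction on the two sides yields a simplicial vertex
in every induced subgraph. Colouring greedily along a simplicial elimination order then uses only
`ω` colours.
-/

namespace SimpleGraph

variable {V : Type*} {G : SimpleGraph V}

/-- `G.induce t` as a graph on all of `V`, so that walks through `t` are walks between vertices
of `V` rather than of the subtype. -/
def restrict (G : SimpleGraph V) (t : Set V) : SimpleGraph V where
  Adj u v := G.Adj u v ∧ u ∈ t ∧ v ∈ t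
  symm.symm _ _ h := ⟨h.1.symm, h.2.2, h.2.1⟩

@[simp]
lemma restrict_adj {t : Set V} {u v : V} :
    (G.restrict t).Adj u v ↔ G.Adj u v ∧ u ∈ t ∧ v ∈ t :=
  .rfl

lemma restrict_le (t : Set V) : G.restrict t ≤ G := fun _ _ h => h.1

lemma restrict_mono {t t' : Set V} (h : t ⊆ t') : G.restrict t ≤ G.restrict t' :=
  fun _ _ huv => ⟨huv.1, h huv.2.1, h huv.2.2⟩

lemma Walk.support_subset_of_restrict {t : Set V} {u v : V} (hu : u ∈ t) :
    ∀ p : (G.restrict t).Walk u v, ∀ w ∈ p.support, w ∈ t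
  | .nil, w, hw => by
    rw [Walk.support_nil, List.mem_singleton] at hw
    rwa [hw]
  | .cons h p, w, hw => by
    rcases List.mem_cons.mp (Walk.support_cons h p ▸ hw) with rfl | hw
    · exact hu
    · exact support_subset_of_restrict (restrict_adj.mp h).2.2 p w hw

lemma Reachable.mem_of_restrict {t : Set V} {u v : V} (h : (G.restrict t).Reachable u v)
    (hu : u ∈ t) : v ∈ t :=
  h.elim fun p => p.support_subset_of_restrict hu v p.end_mem_support

lemma Reachable.restrict_component {t : Set V} {a v : V} (h : (G.restrict t).Reachable a v) :
    (G.restrict {w | (G.restrict t).Reachable a w}).Reachable a v := by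
  have of_walk : ∀ {u v} (p : (G.restrict t).Walk u v), (G.restrict t).Reachable a u →
      (G.restrict {w | (G.restrict t).Reachable a w}).Reachable u v := by
    intro u v p
    induction p with
    | nil => exact fun _ => .rfl
    | cons h _ ih =>
      intro hu
      have hw := hu.trans h.reachable
      exact (restrict_adj.mpr ⟨(restrict_adj.mp h).1, hu, hw⟩).reachable.trans (ih hw)
  exact h.elim fun p => of_walk p .rfl

lemma exists_adj_of_reachable_restrict_insert {t : Set V} {a b x : V} (ha : a ∈ t)
    (hab : ¬(G.restrict t).Reachable a b) (h : (G.restrict (insert x t)).Reachable a b) :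
    ∃ u, (G.restrict t).Reachable a u ∧ G.Adj u x := by
  have of_walk : ∀ {v b'} (p : (G.restrict (insert x t)).Walk v b'), b' = b → v ∈ t →
      (G.restrict t).Reachable a v → ∃ u, (G.restrict t).Reachable a u ∧ G.Adj u x := by
    intro v b' p
    induction p with
    | nil => exact fun hb _ hv => absurd (hb ▸ hv) hab
    | @cons v w _ h _ ih =>
      intro hb hv hav
      obtain ⟨hvw, -, hw⟩ := restrict_adj.mp h
      rcases hw with rfl | hw
      · exact ⟨v, hav, hvw⟩
      · exact ih hb hw (hav.trans (restrict_adj.mpr ⟨hvw, hv, hw⟩).reachable)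
  exact h.elim fun p => of_walk p rfl ha .rfl

lemma reachable_restrict_insert_component {t : Set V} {c x y : V}
    (hx : ∃ u, (G.restrict t).Reachable c u ∧ G.Adj u x)
    (hy : ∃ u, (G.restrict t).Reachable c u ∧ G.Adj u y) :
    (G.restrict (insert x (insert y {w | (G.restrict t).Reachable c w}))).Reachable x y := by
  obtain ⟨u, hu, hux⟩ := hx
  obtain ⟨v, hv, hvy⟩ := hy
  have huv := hu.restrict_component.symm.trans hv.restrict_component
  exact (restrict_adj.mpr ⟨hux.symm, .inl rfl, .inr (.inr hu)⟩).reachable.trans <|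
    (huv.mono (restrict_mono fun w hw => .inr (.inr hw))).trans
    (restrict_adj.mpr ⟨hvy, .inr (.inr hv), .inr (.inl rfl)⟩).reachable

lemma Walk.getVert_dist_of_length_eq_dist {u v w : V} {p : G.Walk u v}
    (hp : p.length = G.dist u v) (hw : w ∈ p.support) : p.getVert (G.dist u w) = w := by
  classical
  rw [← length_eq_dist_of_subwalk hp (p.isSubwalk_takeUntil hw)]
  exact p.getVert_length_takeUntil hw

lemma Walk.dist_eq_dist_add_one_of_adj {u v a b : V} {p : G.Walk u v}
    (hp : p.length = G.dist u v) (ha : a ∈ p.support) (hb : b ∈ p.support) (hab : G.Adj a b) :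
    G.dist u b = G.dist u a + 1 ∨ G.dist u a = G.dist u b + 1 := by
  have hne : G.dist u a ≠ G.dist u b := fun h =>
    hab.ne (by rw [← p.getVert_dist_of_length_eq_dist hp ha, h,
      p.getVert_dist_of_length_eq_dist hp hb])
  have := hab.diff_dist_adj (u := u)
  omega

/-- Adjacent vertices of a shortest walk are at distances from its start differing by exactly
one, and three integers cannot pairwise differ by exactly one. -/
lemma Walk.not_triangle_of_length_eq_dist {u v a b c : V} {p : G.Walk u v}
    (hp : p.length = G.dist u v) (ha : a ∈ p.support) (hb : b ∈ p.support)
    (hc : c ∈ p.support) (hab : G.Adj a b) (hbc : G.Adj b c) (hac : G.Adj a c) : False := by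
  have := p.dist_eq_dist_add_one_of_adj hp ha hb hab
  have := p.dist_eq_dist_add_one_of_adj hp hb hc hbc
  have := p.dist_eq_dist_add_one_of_adj hp ha hc hac
  omega

lemma HasCompleteMinor.le_card [Finite V] {k : ℕ} (hk : HasCompleteMinor G k) :
    k ≤ Nat.card V := by
  obtain ⟨B, hconn, hdisj, -⟩ := hk
  have hne (i : Fin k) : ∃ v, v ∈ B i := (hconn i).nonempty.elim fun v => ⟨v.1, v.2⟩
  choose r hr using hne
  have hinj : Function.Injective r := fun i j hij => by
    by_contra hne
    exact Set.disjoint_left.mp (hdisj i j hne) (hr i) (hij ▸ hr j)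
  simpa using Nat.card_le_card_of_injective r hinj

lemma le_hadwigerNumber [Finite V] {k : ℕ} (hk : HasCompleteMinor G k) :
    k ≤ hadwigerNumber G :=
  le_csSup ⟨Nat.card V, fun _ => HasCompleteMinor.le_card⟩ hk

lemma hasCompleteMinor_induce {T : Set V} {k : ℕ} (B : Fin k → Set V) (hBT : ∀ i, B i ⊆ T)
    (hconn : ∀ i, (G.induce (B i)).Connected) (hdisj : ∀ i j, i ≠ j → Disjoint (B i) (B j))
    (hadj : ∀ i j, i ≠ j → ∃ u ∈ B i, ∃ v ∈ B j, G.Adj u v) :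
    HasCompleteMinor (G.induce T) k := by
  refine ⟨fun i => Subtype.val ⁻¹' B i, fun i => ?_, fun i j hij => ?_, fun i j hij => ?_⟩
  · let f : G.induce (B i) →g (G.induce T).induce (Subtype.val ⁻¹' B i) :=
      ⟨fun v => ⟨⟨v, hBT i v.2⟩, v.2⟩, id⟩
    exact (hconn i).map f fun ⟨⟨v, _⟩, hv⟩ => ⟨⟨v, hv⟩, rfl⟩
  · exact (hdisj i j hij).preimage _
  · obtain ⟨u, hu, v, hv, huv⟩ := hadj i j hij
    exact ⟨⟨u, hBT i hu⟩, hu, ⟨v, hBT j hv⟩, hv, huv⟩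

lemma hasCompleteMinor_three_induce {T B₀ B₁ B₂ : Set V} (h₀ : B₀ ⊆ T) (h₁ : B₁ ⊆ T)
    (h₂ : B₂ ⊆ T) (hc₀ : (G.induce B₀).Connected) (hc₁ : (G.induce B₁).Connected)
    (hc₂ : (G.induce B₂).Connected) (hd₀₁ : Disjoint B₀ B₁) (hd₀₂ : Disjoint B₀ B₂)
    (hd₁₂ : Disjoint B₁ B₂) (ha₀₁ : ∃ u ∈ B₀, ∃ v ∈ B₁, G.Adj u v)
    (ha₀₂ : ∃ u ∈ B₀, ∃ v ∈ B₂, G.Adj u v) (ha₁₂ : ∃ u ∈ B₁, ∃ v ∈ B₂, G.Adj u v) :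
    HasCompleteMinor (G.induce T) 3 := by
  have adj_symm {X Y : Set V} : (∃ u ∈ X, ∃ v ∈ Y, G.Adj u v) → ∃ u ∈ Y, ∃ v ∈ X, G.Adj u v :=
    fun ⟨u, hu, v, hv, huv⟩ => ⟨v, hv, u, hu, huv.symm⟩
  refine hasCompleteMinor_induce ![B₀, B₁, B₂] (fun i => ?_) (fun i => ?_)
    (fun i j hij => ?_) (fun i j hij => ?_) <;> fin_cases i <;> try fin_cases j
  all_goals first
    | assumption | exact absurd rfl hij | exact Disjoint.symm ‹_› | exact adj_symm ‹_›

/-- Branch sets: `{x}`, `{p.snd}` and the rest of the cycle formed by `p` and `q`. -/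
lemma hasCompleteMinor_three_of_isPath {x y : V} {p q : G.Walk x y} (hp : p.IsPath)
    (hq : q.IsPath) (hne : x ≠ y) (hxy : ¬G.Adj x y)
    (hpq : ∀ w ∈ p.support, w ∈ q.support → w = x ∨ w = y) :
    HasCompleteMinor (G.induce ({w | w ∈ p.support} ∪ {w | w ∈ q.support})) 3 := by
  have mem_of_mem_tail {u v w : V} {r : G.Walk u v} (hr : ¬r.Nil) (hw : w ∈ r.tail.support) :
      w ∈ r.support := Walk.cons_support_tail hr ▸ List.mem_cons_of_mem _ hw
  have start_notMem_tail {u v : V} {r : G.Walk u v} (hr : r.IsPath) (hn : ¬r.Nil) :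
      u ∉ r.tail.support := (List.nodup_cons.mp (Walk.cons_support_tail hn ▸ hr.support_nodup)).1
  have hpn : ¬p.Nil := Walk.not_nil_of_ne hne
  have hqn : ¬q.Nil := Walk.not_nil_of_ne hne
  have hxp : G.Adj x p.snd := p.adj_snd hpn
  have hptn : ¬p.tail.Nil := fun h => hxy (h.eq ▸ hxp)
  have hx₁ : x ∉ p.tail.tail.support := fun h => start_notMem_tail hp hpn (mem_of_mem_tail hptn h)
  have hx₂ : x ∉ q.tail.support := start_notMem_tail hq hqn
  have hsnd₁ : p.snd ∉ p.tail.tail.support := start_notMem_tail hp.tail hptn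
  have hsnd₂ : p.snd ∉ q.tail.support := fun h => by
    rcases hpq p.snd (mem_of_mem_tail hpn p.tail.start_mem_support) (mem_of_mem_tail hqn h)
      with h | h
    · exact hxp.ne h.symm
    · exact hsnd₁ (by convert p.tail.tail.end_mem_support)
  refine hasCompleteMinor_three_induce (B₀ := {x}) (B₁ := {p.snd})
    (B₂ := {w | w ∈ p.tail.tail.support} ∪ {w | w ∈ q.tail.support}) ?_ ?_ ?_ (by simp) (by simp)
    ?_ ?_ ?_ ?_ ⟨x, rfl, p.snd, rfl, hxp⟩ ?_ ?_
  · exact Set.singleton_subset_iff.mpr (Or.inl p.start_mem_support)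
  · exact Set.singleton_subset_iff.mpr (Or.inl (mem_of_mem_tail hpn p.tail.start_mem_support))
  · exact Set.union_subset_union (fun w hw => mem_of_mem_tail hpn (mem_of_mem_tail hptn hw))
      (fun w hw => mem_of_mem_tail hqn hw)
  · exact induce_union_connected p.tail.tail.connected_induce_support.preconnected
      q.tail.connected_induce_support.preconnected
      ⟨y, p.tail.tail.end_mem_support, q.tail.end_mem_support⟩
  · exact Set.disjoint_singleton.mpr hxp.ne
  · exact Set.disjoint_singleton_left.mpr (by rintro (h | h) <;> contradiction)
  · exact Set.disjoint_singleton_left.mpr (by rintro (h | h) <;> contradiction)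
  · exact ⟨x, rfl, q.snd, Or.inr q.tail.start_mem_support, q.adj_snd hqn⟩
  · exact ⟨p.snd, rfl, p.tail.snd, Or.inl p.tail.tail.start_mem_support, p.tail.adj_snd hptn⟩

lemma cliqueNum_lt_of_cliqueFree [Finite V] {n : ℕ} (h : G.CliqueFree n) : G.cliqueNum < n := by
  obtain ⟨t, ht⟩ := G.exists_isNClique_cliqueNum
  by_contra! hn
  exact h.mono hn t ht

lemma mem_or_mem_of_triangle {P Q : Set V} (hPQ : ∀ u ∈ P \ Q, ∀ w ∈ Q \ P, ¬G.Adj u w)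
    {a b c : V} (ha : a ∈ P ∪ Q) (hb : b ∈ P ∪ Q) (hc : c ∈ P ∪ Q) (hab : G.Adj a b)
    (hbc : G.Adj b c) (hac : G.Adj a c) : (a ∈ P ∧ b ∈ P ∧ c ∈ P) ∨ (a ∈ Q ∧ b ∈ Q ∧ c ∈ Q) := by
  have toP {u w : V} (hw : w ∈ P ∪ Q) (huw : G.Adj u w) (hu : u ∈ P) (huQ : u ∉ Q) : w ∈ P :=
    hw.elim id fun hwQ => by_contra fun hwP => hPQ u ⟨hu, huQ⟩ w ⟨hwQ, hwP⟩ huw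
  by_cases hQ : a ∈ Q ∧ b ∈ Q ∧ c ∈ Q
  · exact .inr hQ
  simp only [not_and_or] at hQ
  rcases hQ with h | h | h
  · have haP := ha.resolve_right h
    exact .inl ⟨haP, toP hb hab haP h, toP hc hac haP h⟩
  · have hbP := hb.resolve_right h
    exact .inl ⟨toP ha hab.symm hbP h, hbP, toP hc hbc hbP h⟩
  · have hcP := hc.resolve_right h
    exact .inl ⟨toP ha hac.symm hcP h, toP hb hbc.symm hcP h, hcP⟩

/-- Non-adjacent `x` and `y` joined through both `A` and `B` would lie on a hole, an induced
cycle of length at least four. -/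
def HoleFree (G : SimpleGraph V) : Prop :=
  ∀ ⦃x y : V⦄ ⦃A B : Set V⦄, x ≠ y → Disjoint A B → (∀ a ∈ A, ∀ b ∈ B, ¬G.Adj a b) →
    (G.restrict (insert x (insert y A))).Reachable x y →
    (G.restrict (insert x (insert y B))).Reachable x y → G.Adj x y

theorem holeFree_of_hadwigerNumber_eq_cliqueNum [Finite V]
    (h : ∀ s : Set V, hadwigerNumber (G.induce s) = (G.induce s).cliqueNum) : G.HoleFree := by
  classical
  intro x y A B hne hAB hanti hA hB
  by_contra hxy
  obtain ⟨p, hp, hplen⟩ := hA.exists_path_of_dist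
  obtain ⟨q, hq, hqlen⟩ := hB.exists_path_of_dist
  have hpA := p.support_subset_of_restrict (Set.mem_insert x _)
  have hqB := q.support_subset_of_restrict (Set.mem_insert x _)
  have hA' : ∀ w ∈ p.support, w ∉ q.support → w ∈ A := fun w hw hwq => by
    rcases hpA w hw with rfl | rfl | h
    exacts [absurd q.start_mem_support hwq, absurd q.end_mem_support hwq, h]
  have hB' : ∀ w ∈ q.support, w ∉ p.support → w ∈ B := fun w hw hwp => by
    rcases hqB w hw with rfl | rfl | h
    exacts [absurd p.start_mem_support hwp, absurd p.end_mem_support hwp, h]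
  set T : Set V := {w | w ∈ p.support} ∪ {w | w ∈ q.support}
  have hminor : HasCompleteMinor (G.induce T) 3 := by
    have hpq : ∀ w ∈ p.support, w ∈ q.support → w = x ∨ w = y := fun w hwp hwq => by
      rcases hpA w hwp with h | h | hwA
      · exact .inl h
      · exact .inr h
      rcases hqB w hwq with h | h | hwB
      · exact .inl h
      · exact .inr h
      exact (Set.disjoint_left.mp hAB hwA hwB).elim
    have := hasCompleteMinor_three_of_isPath (hp.mapLe (restrict_le _)) (hq.mapLe (restrict_le _))
      hne hxy (by simpa only [Walk.support_mapLe_eq_support] using hpq)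
    rwa [Walk.support_mapLe_eq_support, Walk.support_mapLe_eq_support] at this
  have hfree : (G.induce T).CliqueFree 3 := by
    intro t ht
    obtain ⟨⟨a, ha⟩, ⟨b, hb⟩, ⟨c, hc⟩, hab, hac, hbc, -⟩ := is3Clique_iff.mp ht
    simp only [comap_adj, Function.Embedding.coe_subtype] at hab hac hbc
    rcases mem_or_mem_of_triangle (fun u hu w hw => hanti u (hA' u hu.1 hu.2) w (hB' w hw.1 hw.2))
      ha hb hc hab hbc hac with ⟨ha, hb, hc⟩ | ⟨ha, hb, hc⟩
    · exact p.not_triangle_of_length_eq_dist hplen ha hb hc ⟨hab, hpA a ha, hpA b hb⟩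
        ⟨hbc, hpA b hb, hpA c hc⟩ ⟨hac, hpA a ha, hpA c hc⟩
    · exact q.not_triangle_of_length_eq_dist hqlen ha hb hc ⟨hab, hqB a ha, hqB b hb⟩
        ⟨hbc, hqB b hb, hqB c hc⟩ ⟨hac, hqB a ha, hqB c hc⟩
  have h3 := le_hadwigerNumber hminor
  rw [h T] at h3
  exact h3.not_gt (cliqueNum_lt_of_cliqueFree hfree)

/-- For an inclusion-minimal separator `S`, each vertex of `S` has a neighbour in the components
of both `a` and `b`, so any two vertices of `S` are joined through both components. -/
theorem HoleFree.exists_isClique_separator [Finite V] (hG : G.HoleFree) {s : Set V} {a b : V}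
    (ha : a ∈ s) (hb : b ∈ s) (hab : a ≠ b) (hnab : ¬G.Adj a b) :
    ∃ S ⊆ s, a ∉ S ∧ b ∉ S ∧ G.IsClique S ∧ ¬(G.restrict (s \ S)).Reachable a b := by
  let IsSep (S : Set V) : Prop :=
    S ⊆ s ∧ a ∉ S ∧ b ∉ S ∧ ¬(G.restrict (s \ S)).Reachable a b
  have hsep : IsSep (s \ {a, b}) := by
    refine ⟨Set.sdiff_subset, by simp, by simp, fun ⟨p⟩ => ?_⟩
    obtain ⟨hadj, -, hsnds, hsndab⟩ := restrict_adj.mp (p.adj_snd (Walk.not_nil_of_ne hab))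
    rcases not_and_not_right.mp hsndab hsnds with h | h
    · exact hadj.ne h.symm
    · exact hnab (h ▸ hadj)
  obtain ⟨S, hmin⟩ := exists_minimal_of_wellFoundedLT IsSep ⟨_, hsep⟩
  obtain ⟨hSs, haS, hbS, hSab⟩ := hmin.prop
  have hreach {x : V} (hx : x ∈ S) : (G.restrict (insert x (s \ S))).Reachable a b := by
    have hlt : S \ {x} < S := Set.sdiff_singleton_ssubset.mpr hx
    have hnot := hmin.not_prop_of_lt hlt
    simp only [IsSep, not_and, not_not] at hnot
    refine (hnot (Set.sdiff_subset.trans hSs) (fun h => haS h.1) (fun h => hbS h.1)).mono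
      (restrict_mono fun w hw => ?_)
    by_cases hwx : w = x
    · exact .inl hwx
    · exact .inr ⟨hw.1, fun hwS => hw.2 ⟨hwS, hwx⟩⟩
  have hSba : ¬(G.restrict (s \ S)).Reachable b a := fun h => hSab h.symm
  refine ⟨S, hSs, haS, hbS, fun x hx y hy hxy => ?_, hSab⟩
  have hanti : ∀ u ∈ {w | (G.restrict (s \ S)).Reachable a w},
      ∀ w ∈ {w | (G.restrict (s \ S)).Reachable b w}, ¬G.Adj u w := fun u hu w hw huw =>
    hSab <| hu.trans <| (restrict_adj.mpr ⟨huw, hu.mem_of_restrict ⟨ha, haS⟩,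
      hw.mem_of_restrict ⟨hb, hbS⟩⟩).reachable.trans hw.symm
  refine hG hxy (Set.disjoint_left.mpr fun w hwa hwb => hSab (hwa.trans hwb.symm)) hanti
    (reachable_restrict_insert_component ?_ ?_) (reachable_restrict_insert_component ?_ ?_)
  · exact exists_adj_of_reachable_restrict_insert ⟨ha, haS⟩ hSab (hreach hx)
  · exact exists_adj_of_reachable_restrict_insert ⟨ha, haS⟩ hSab (hreach hy)
  · exact exists_adj_of_reachable_restrict_insert ⟨hb, hbS⟩ hSba (hreach hx).symm
  · exact exists_adj_of_reachable_restrict_insert ⟨hb, hbS⟩ hSba (hreach hy).symm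

def IsSimplicial (G : SimpleGraph V) (s : Set V) (v : V) : Prop :=
  v ∈ s ∧ G.IsClique (G.neighborSet v ∩ s)

lemma IsSimplicial.of_subset {s t : Set V} {v : V} (h : G.IsSimplicial t v) (hts : t ⊆ s)
    (hN : G.neighborSet v ∩ s ⊆ t) : G.IsSimplicial s v :=
  ⟨hts h.1, IsClique.subset (fun _ hw => Set.mem_inter hw.1 (hN hw)) h.2⟩

/-- Dirac: split `s` along a clique separator of two non-adjacent vertices; each side
contributes a simplicial vertex, and the two are non-adjacent, so one of them avoids `K`. -/
theorem HoleFree.exists_isSimplicial_notMem [Finite V] (hG : G.HoleFree) {s K : Set V}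
    (hK : G.IsClique K) {v : V} (hv : v ∈ s) (hvK : v ∉ K) :
    ∃ x ∈ s, x ∉ K ∧ G.IsSimplicial s x := by
  induction hn : s.ncard using Nat.strong_induction_on generalizing s K v with | _ n ih =>
  by_cases hs : G.IsClique s
  · exact ⟨v, hv, hvK, hv, IsClique.subset Set.inter_subset_right hs⟩
  obtain ⟨a, ha, b, hb, hab, hnab⟩ : ∃ a ∈ s, ∃ b ∈ s, a ≠ b ∧ ¬G.Adj a b := by
    simpa [IsClique, Set.Pairwise] using hs
  obtain ⟨S, hSs, haS, hbS, hS, hSab⟩ := hG.exists_isClique_separator ha hb hab hnab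
  have side {c d : V} (hc : c ∈ s) (hd : d ∈ s) (hcS : c ∉ S) (hdS : d ∉ S)
      (hcd : ¬(G.restrict (s \ S)).Reachable c d) :
      ∃ z, (G.restrict (s \ S)).Reachable c z ∧ G.IsSimplicial s z := by
    set C := {w | (G.restrict (s \ S)).Reachable c w}
    have hCs : C ⊆ s \ S := fun w hw => hw.mem_of_restrict ⟨hc, hcS⟩
    have hCSs : C ∪ S ⊆ s := Set.union_subset (hCs.trans Set.sdiff_subset) hSs
    have hlt : (C ∪ S).ncard < n := hn ▸ Set.ncard_lt_ncard
      ((Set.ssubset_iff_of_subset hCSs).mpr ⟨d, hd, fun h => h.elim hcd hdS⟩) (Set.toFinite s)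
    obtain ⟨z, hz, hzS, hzsimp⟩ := ih _ hlt hS (Or.inl (.rfl : C c)) hcS rfl
    have hzC : z ∈ C := hz.resolve_right hzS
    refine ⟨z, hzC, hzsimp.of_subset hCSs fun w ⟨hzw, hws⟩ => ?_⟩
    by_cases hwS : w ∈ S
    · exact .inr hwS
    · exact .inl (hzC.trans (restrict_adj.mpr ⟨hzw, hCs hzC, hws, hwS⟩).reachable)
  obtain ⟨za, hza, hzas⟩ := side ha hb haS hbS hSab
  obtain ⟨zb, hzb, hzbs⟩ := side hb ha hbS haS fun h => hSab h.symm
  have hne : za ≠ zb := fun h => hSab (hza.trans (h ▸ hzb.symm))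
  have hnadj : ¬G.Adj za zb := fun h => hSab <| hza.trans <| (restrict_adj.mpr
    ⟨h, hza.mem_of_restrict ⟨ha, haS⟩, hzb.mem_of_restrict ⟨hb, hbS⟩⟩).reachable.trans hzb.symm
  by_cases hzaK : za ∈ K
  · exact ⟨zb, hzbs.1, fun hzbK => hnadj (hK hzaK hzbK hne), hzbs⟩
  · exact ⟨za, hzas.1, hzaK, hzas⟩

lemma IsClique.ncard_le_cliqueNum_induce [Finite V] {K s : Set V} (hK : G.IsClique K)
    (hKs : K ⊆ s) : K.ncard ≤ (G.induce s).cliqueNum := by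
  classical
  have hK' : (G.induce s).IsClique (Subtype.val ⁻¹' K : Set s) :=
    isClique_induce_iff.mpr (by rwa [Subtype.image_preimage_coe, Set.inter_eq_right.mpr hKs])
  have hfin := Set.toFinite (Subtype.val ⁻¹' K : Set s)
  have := IsClique.card_le_cliqueNum (t := hfin.toFinset) (tc := by simpa using hK')
  rwa [← Set.ncard_eq_toFinset_card _ hfin,
    Set.ncard_preimage_of_injective_subset_range Subtype.val_injective (by simpa using hKs)] at this

lemma cliqueNum_induce_mono [Finite V] {s t : Set V} (hts : t ⊆ s) :
    (G.induce t).cliqueNum ≤ (G.induce s).cliqueNum := by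
  obtain ⟨K, hK⟩ := (G.induce t).exists_isNClique_cliqueNum
  rw [← hK.card_eq, ← Set.ncard_coe_finset, ← Set.ncard_image_of_injective _ Subtype.val_injective]
  exact (isClique_induce_iff.mp hK.isClique).ncard_le_cliqueNum_induce
    ((Subtype.coe_image_subset t _).trans hts)

lemma IsSimplicial.ncard_neighborSet_inter_lt [Finite V] {s : Set V} {v : V}
    (hv : G.IsSimplicial s v) : (G.neighborSet v ∩ s).ncard < (G.induce s).cliqueNum := by
  have hvN : v ∉ G.neighborSet v ∩ s := fun h => G.loopless.irrefl v h.1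
  have := (hv.2.insert fun w hw _ => hw.1).ncard_le_cliqueNum_induce
    (Set.insert_subset hv.1 Set.inter_subset_right)
  rwa [Set.ncard_insert_of_notMem hvN] at this

theorem colorable_induce_cliqueNum [Finite V]
    (hsimp : ∀ s : Set V, s.Nonempty → ∃ v, G.IsSimplicial s v) (s : Set V) :
    (G.induce s).Colorable (G.induce s).cliqueNum := by
  classical
  suffices ∃ c : V → ℕ, (∀ v ∈ s, c v < (G.induce s).cliqueNum) ∧
      ∀ u ∈ s, ∀ v ∈ s, G.Adj u v → c u ≠ c v by
    obtain ⟨c, hlt, hc⟩ := this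
    exact ⟨⟨fun v => ⟨c v, hlt v v.2⟩,
      fun huv h => hc _ (Subtype.prop _) _ (Subtype.prop _) huv (congrArg Fin.val h)⟩⟩
  induction hn : s.ncard using Nat.strong_induction_on generalizing s with | _ n ih =>
  rcases s.eq_empty_or_nonempty with rfl | hne
  · exact ⟨0, by simp, by simp⟩
  obtain ⟨v, hv⟩ := hsimp s hne
  obtain ⟨c, hclt, hc⟩ := ih _ (hn ▸ Set.ncard_sdiff_singleton_lt_of_mem hv.1) (s \ {v}) rfl
  obtain ⟨m, hm, hmN⟩ := Set.exists_mem_notMem_of_ncard_lt_ncard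
    (s := c '' (G.neighborSet v ∩ s)) (t := ↑(Finset.range (G.induce s).cliqueNum)) (by
      rw [Set.ncard_coe_finset, Finset.card_range]
      exact (Set.ncard_image_le (Set.toFinite _)).trans_lt hv.ncard_neighborSet_inter_lt)
  have hmN' {w : V} (hw : w ∈ s) (hvw : G.Adj v w) : m ≠ c w := fun h => hmN ⟨w, ⟨hvw, hw⟩, h.symm⟩
  refine ⟨Function.update c v m, fun w hw => ?_, fun u hu w hw huw => ?_⟩
  · by_cases hwv : w = v
    · rw [hwv, Function.update_self]
      exact Finset.mem_range.mp hm
    · rw [Function.update_of_ne hwv]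
      exact (hclt w ⟨hw, hwv⟩).trans_le (cliqueNum_induce_mono Set.sdiff_subset)
  by_cases huv : u = v <;> by_cases hwv : w = v
  · exact absurd (huv.trans hwv.symm) huw.ne
  · rw [huv, Function.update_self, Function.update_of_ne hwv]
    exact hmN' hw (huv ▸ huw)
  · rw [hwv, Function.update_self, Function.update_of_ne huv]
    exact (hmN' hu (hwv ▸ huw.symm)).symm
  · rw [Function.update_of_ne huv, Function.update_of_ne hwv]
    exact hc u ⟨hu, huv⟩ w ⟨hw, hwv⟩ huw

end SimpleGraph

/-- Every ωh-perfect graph is perfect. -/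
theorem omega_hadwiger_perfect_is_perfect {V : Type*} [Fintype V] (G : SimpleGraph V)
    (h : ∀ s : Set V, hadwigerNumber (G.induce s) = (G.induce s).cliqueNum) :
    ∀ s : Set V, (G.induce s).chromaticNumber = ((G.induce s).cliqueNum : ℕ∞) := by
  have hsimp (s : Set V) (hs : s.Nonempty) : ∃ v, G.IsSimplicial s v := by
    obtain ⟨v, -, -, hv⟩ := (holeFree_of_hadwigerNumber_eq_cliqueNum h).exists_isSimplicial_notMem
      isClique_empty hs.some_mem (Set.notMem_empty _)
    exact ⟨v, hv⟩
  exact fun s => le_antisymm (colorable_induce_cliqueNum hsimp s).chromaticNumber_le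
    cliqueNum_le_chromaticNumber
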